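/- arXiv:1210.4346 — 4 statements merged into one kernel-verified Lean document; each statement's English description precedes it below -/
import Mathlib

section
/- Let φ : ℝⁿ → [0,∞] be a lower semicontinuous convex function with φ(0) = 0, and let φ° be its polar function. Then for every t > 0: ({x : φ(x) ≤ 1/t})° ⊆ {x : φ°(x) ≤ t} ⊆ 2·({x : φ(x) ≤ 1/t})°, where A° denotes the polar set of A and 2·A = {2a : a ∈ A}. -/
open ENNReal Pointwise RealInnerProductSpace

noncomputable section

abbrev En (n : ℕ) := EuclideanSpace ℝ (Fin n)

/-- Convexity for `[0,∞]`-valued functions on `ℝⁿ`. -/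
def ConvexENN {n : ℕ} (φ : En n → ℝ≥0∞) : Prop :=
  ∀ x y : En n, ∀ l : ℝ, 0 < l → l < 1 →
    φ (l • x + (1 - l) • y) ≤ ENNReal.ofReal l * φ x + ENNReal.ofReal (1 - l) * φ y

/-- The polar set `A° = {y : ⟨x,y⟩ ≤ 1 for all x ∈ A}`. -/
def polarSet {n : ℕ} (A : Set (En n)) : Set (En n) :=
  {y | ∀ x ∈ A, ⟪x, y⟫ ≤ (1 : ℝ)}

/-- The polar function `φ°(x) = sup_y (⟨x,y⟩ − 1)₊ / φ(y)`, with the `ℝ≥0∞`-conventions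
`0 / 0 = 0` and `a / 0 = ∞` for `a > 0`. -/
def polarFn {n : ℕ} (φ : En n → ℝ≥0∞) : En n → ℝ≥0∞ :=
  fun x => ⨆ y : En n, ENNReal.ofReal (⟪x, y⟫ - 1) / φ y

/-!
A geometric convex function satisfies `φ (l • y) ≤ l * φ y` for `l ∈ [0, 1]`. Hence if
`φ y = c > 1/t`, the point `y / (t c)` lies in `K = {φ ≤ 1/t}`, so every `x ∈ K°` has
`⟨x, y⟩ ≤ t c`, which bounds the quotient defining `φ°(x)` by `t`. Conversely, `φ°(x) ≤ t`
means `(⟨x, y⟩ - 1)₊ ≤ t φ(y)`, which is at most `1` on `K`; so `⟨x, y⟩ ≤ 2` there.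
-/

lemma ConvexENN.apply_smul_le {n : ℕ} {φ : En n → ℝ≥0∞} (hconv : ConvexENN φ) (h0 : φ 0 = 0)
    (y : En n) {l : ℝ} (hl0 : 0 ≤ l) (hl1 : l ≤ 1) :
    φ (l • y) ≤ ENNReal.ofReal l * φ y := by
  rcases hl0.eq_or_lt with rfl | hl0
  · simp [h0]
  rcases hl1.eq_or_lt with rfl | hl1
  · simp
  simpa [h0] using hconv y 0 l hl0 hl1

lemma polarFn_le_ofReal_iff {n : ℕ} (φ : En n → ℝ≥0∞) (x : En n) {t : ℝ} (ht : 0 < t) :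
    polarFn φ x ≤ ENNReal.ofReal t ↔ ∀ y, ENNReal.ofReal (⟪x, y⟫ - 1) ≤ ENNReal.ofReal t * φ y := by
  refine iSup_le_iff.trans (forall_congr' fun y => ENNReal.div_le_iff_le_mul ?_ ?_) <;>
    simp [ht]

lemma ofReal_inner_sub_one_le_of_mem_polarSet {n : ℕ} {φ : En n → ℝ≥0∞}
    (hconv : ConvexENN φ) (h0 : φ 0 = 0) {t : ℝ} (ht : 0 < t) {x : En n}
    (hx : x ∈ polarSet {z | φ z ≤ ENNReal.ofReal (1 / t)}) (y : En n) :
    ENNReal.ofReal (⟪x, y⟫ - 1) ≤ ENNReal.ofReal t * φ y := by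
  by_cases hyK : φ y ≤ ENNReal.ofReal (1 / t)
  · have hxy : ⟪y, x⟫ ≤ 1 := hx y hyK
    rw [real_inner_comm, ← sub_nonpos, ← ENNReal.ofReal_eq_zero] at hxy
    simp [hxy]
  by_cases htop : φ y = ⊤
  · simp [htop, ht]
  obtain ⟨c, hcy⟩ : ∃ c : ℝ, φ y = ENNReal.ofReal c := ⟨_, (ENNReal.ofReal_toReal htop).symm⟩
  rw [hcy] at hyK ⊢
  have hc : 1 / t < c := (ENNReal.ofReal_lt_ofReal_iff'.mp (not_le.mp hyK)).1
  have hc0 : 0 < c := (one_div_pos.mpr ht).trans hc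
  have htc : 1 < t * c := by rwa [div_lt_iff₀' ht] at hc
  have hl1 : 1 / (t * c) ≤ 1 := (div_lt_one (by positivity)).mpr htc |>.le
  have hscaled : φ ((1 / (t * c)) • y) ≤ ENNReal.ofReal (1 / t) := by
    refine (hconv.apply_smul_le h0 y (by positivity) hl1).trans_eq ?_
    rw [hcy, ← ENNReal.ofReal_mul (by positivity)]
    congr 1
    field_simp
  have hxy : ⟪x, y⟫ ≤ t * c := by
    have := hx _ hscaled
    rwa [real_inner_smul_left, real_inner_comm, one_div_mul_eq_div,
      div_le_one (by positivity)] at this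
  rw [← ENNReal.ofReal_mul ht.le]
  exact ENNReal.ofReal_le_ofReal (by linarith)

theorem stmt6_general (n : ℕ) (φ : En n → ℝ≥0∞)
    (hconv : ConvexENN φ) (h0 : φ 0 = 0) :
    ∀ t : ℝ, 0 < t →
      polarSet {x : En n | φ x ≤ ENNReal.ofReal (1 / t)} ⊆
        {x : En n | polarFn φ x ≤ ENNReal.ofReal t} ∧
      {x : En n | polarFn φ x ≤ ENNReal.ofReal t} ⊆
        (2 : ℝ) • polarSet {x : En n | φ x ≤ ENNReal.ofReal (1 / t)} := by
  intro t ht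
  refine ⟨fun x hx => (polarFn_le_ofReal_iff φ x ht).mpr
    (ofReal_inner_sub_one_le_of_mem_polarSet hconv h0 ht hx),
    fun x hx => (Set.mem_smul_set_iff_inv_smul_mem₀ two_ne_zero _ _).mpr fun y hy => ?_⟩
  have hxy : ENNReal.ofReal (⟪x, y⟫ - 1) ≤ 1 :=
    calc ENNReal.ofReal (⟪x, y⟫ - 1) ≤ ENNReal.ofReal t * φ y :=
          (polarFn_le_ofReal_iff φ x ht).mp hx y
      _ ≤ ENNReal.ofReal t * ENNReal.ofReal (1 / t) := mul_le_mul_right hy _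
      _ = 1 := by rw [← ENNReal.ofReal_mul ht.le, mul_one_div_cancel ht.ne', ENNReal.ofReal_one]
  rw [ENNReal.ofReal_le_one] at hxy
  rw [real_inner_smul_right, real_inner_comm]
  linarith

theorem stmt6 (n : ℕ) (φ : En n → ℝ≥0∞)
    (hlsc : LowerSemicontinuous φ) (hconv : ConvexENN φ) (h0 : φ 0 = 0) :
    ∀ t : ℝ, 0 < t →
      polarSet {x : En n | φ x ≤ ENNReal.ofReal (1 / t)} ⊆
        {x : En n | polarFn φ x ≤ ENNReal.ofReal t} ∧
      {x : En n | polarFn φ x ≤ ENNReal.ofReal t} ⊆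
        (2 : ℝ) • polarSet {x : En n | φ x ≤ ENNReal.ofReal (1 / t)} :=
  stmt6_general n φ hconv h0
end
end

section
/- Let k, m be real numbers with 0 ≤ k < m, and let f : [0,∞) → [0,1] be a measurable log-concave function with f(0) = 1. Then ( (1/Γ(m+1)) ∫₀^∞ x^m f(x) dx )^{1/(m+1)} ≤ ( (1/Γ(k+1)) ∫₀^∞ x^k f(x) dx )^{1/(k+1)}, both sides taken in [0,∞]. If moreover 0 < ∫₀^∞ x^k f(x) dx < ∞, then equality holds if and only if there exists c > 0 with f(x) = e^{−cx} for all x ≥ 0. -/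
/-!
Log-concavity together with `f 0 = 1` makes `x ↦ f x ^ x⁻¹` antitone on `(0, ∞)`, so `f`
crosses an exponential `e^{-cx}` at most once, and from above. Choose `c` so that `e^{-cx}` has
the same `k`-th moment as `f`; both normalized moments of `e^{-cx}` equal `1/c`. If `x₀` is the
crossing point, then `x^k (x^{m-k} - x₀^{m-k}) (f x - e^{-cx}) ≤ 0`, and integrating against the
equal `k`-th moments gives `∫ x^m f ≤ ∫ x^m e^{-cx}`. Equality forces this integrand to vanish
a.e., so `f = e^{-cx}` a.e., and the monotonicity of `f x ^ x⁻¹` upgrades this to everywhere.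
-/

open MeasureTheory ENNReal

noncomputable section

/-- The normalized moment `(1/Γ(p+1)) ∫₀^∞ x^p f(x) dx`, with values in `[0,∞]`. -/
def momInt (f : ℝ → ℝ) (p : ℝ) : ℝ≥0∞ :=
  (∫⁻ x in Set.Ici (0 : ℝ), ENNReal.ofReal (x ^ p * f x)) /
    ENNReal.ofReal (Real.Gamma (p + 1))

open Set Real

theorem lintegral_rpow_mul_exp_neg_mul {p c : ℝ} (hp : -1 < p) (hc : 0 < c) :
    ∫⁻ x in Ici (0 : ℝ), ENNReal.ofReal (x ^ p * exp (-c * x)) =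
      ENNReal.ofReal (Gamma (p + 1) / c ^ (p + 1)) := by
  have hGamma := integral_rpow_mul_exp_neg_mul_Ioi (a := p + 1) (by linarith) hc
  simp only [add_sub_cancel_right, ← neg_mul] at hGamma
  have hG : 0 < Gamma (p + 1) := Gamma_pos_of_pos (by linarith)
  have hint : IntegrableOn (fun x : ℝ => x ^ p * exp (-c * x)) (Ioi 0) :=
    .of_integral_ne_zero (by rw [hGamma]; positivity)
  have hnonneg : 0 ≤ᵐ[volume.restrict (Ioi 0)] fun x : ℝ => x ^ p * exp (-c * x) :=
    (ae_restrict_iff' measurableSet_Ioi).2 (ae_of_all _ fun x (hx : 0 < x) => by positivity)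
  rw [← setLIntegral_congr Ioi_ae_eq_Ici, ← ofReal_integral_eq_lintegral_ofReal hint hnonneg,
    hGamma, one_div, inv_rpow hc.le, mul_comm, div_eq_mul_inv]

theorem exists_lintegral_rpow_mul_exp_neg_mul_eq {p : ℝ} (hp : -1 < p) {I : ℝ≥0∞}
    (h0 : I ≠ 0) (htop : I ≠ ∞) :
    ∃ c, 0 < c ∧ ∫⁻ x in Ici (0 : ℝ), ENNReal.ofReal (x ^ p * exp (-c * x)) = I := by
  have hp1 : 0 < p + 1 := by linarith
  have hA : 0 < I.toReal := ENNReal.toReal_pos h0 htop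
  have hG : 0 < Gamma (p + 1) := Gamma_pos_of_pos hp1
  refine ⟨(Gamma (p + 1) / I.toReal) ^ (p + 1)⁻¹, by positivity, ?_⟩
  rw [lintegral_rpow_mul_exp_neg_mul hp (by positivity), rpow_inv_rpow (by positivity) hp1.ne',
    div_div_cancel₀ hG.ne', ofReal_toReal htop]

theorem momInt_exp_neg_mul_rpow {p c : ℝ} (hp : -1 < p) (hc : 0 < c) :
    momInt (fun x => exp (-c * x)) p ^ (1 / (p + 1)) = ENNReal.ofReal c⁻¹ := by
  have hp1 : 0 < p + 1 := by linarith
  have hG : 0 < Gamma (p + 1) := Gamma_pos_of_pos hp1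
  rw [momInt, lintegral_rpow_mul_exp_neg_mul hp hc, ← ofReal_div_of_pos hG,
    div_div_cancel_left' hG.ne', ← inv_rpow hc.le, ← ofReal_rpow_of_pos (by positivity),
    ← ENNReal.rpow_mul, mul_one_div_cancel hp1.ne', ENNReal.rpow_one]

theorem momInt_congr {f g : ℝ → ℝ} (h : ∀ x, 0 ≤ x → f x = g x) (p : ℝ) :
    momInt f p = momInt g p := by
  rw [momInt, momInt, setLIntegral_congr_fun measurableSet_Ici fun x hx => by rw [h x hx]]

theorem lintegral_eq_of_momInt_rpow_eq {f g : ℝ → ℝ} {p : ℝ} (hp : -1 < p)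
    (h : momInt f p ^ (1 / (p + 1)) = momInt g p ^ (1 / (p + 1))) :
    ∫⁻ x in Ici (0 : ℝ), ENNReal.ofReal (x ^ p * f x) =
      ∫⁻ x in Ici (0 : ℝ), ENNReal.ofReal (x ^ p * g x) := by
  have hp1 : 0 < p + 1 := by linarith
  have hG : ENNReal.ofReal (Gamma (p + 1)) ≠ 0 := by simpa using Gamma_pos_of_pos hp1
  have h' := ENNReal.rpow_left_injective (one_div_pos.2 hp1).ne' h
  simp only [momInt, div_eq_mul_inv] at h'
  exact (ENNReal.mul_left_inj (ENNReal.inv_ne_zero.2 ofReal_ne_top) (ENNReal.inv_ne_top.2 hG)).1 h'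

theorem momInt_rpow_le_of_lintegral_le {f g : ℝ → ℝ} {p : ℝ} (hp : -1 < p)
    (h : ∫⁻ x in Ici (0 : ℝ), ENNReal.ofReal (x ^ p * f x) ≤
      ∫⁻ x in Ici (0 : ℝ), ENNReal.ofReal (x ^ p * g x)) :
    momInt f p ^ (1 / (p + 1)) ≤ momInt g p ^ (1 / (p + 1)) :=
  rpow_le_rpow (ENNReal.div_le_div_right h _) (one_div_pos.2 (by linarith)).le

theorem momInt_eq_zero_of_lintegral_eq_zero {f : ℝ → ℝ} (hf : Measurable f) {k m : ℝ}
    (hm : m ≠ 0) (h : ∫⁻ x in Ici (0 : ℝ), ENNReal.ofReal (x ^ k * f x) = 0) :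
    momInt f m = 0 := by
  rw [momInt, ENNReal.div_eq_zero_iff, lintegral_eq_zero_iff (by fun_prop)]
  left
  rw [lintegral_eq_zero_iff (by fun_prop)] at h
  filter_upwards [h, ae_restrict_mem measurableSet_Ici] with x hkx (hx : 0 ≤ x)
  simp only [Pi.zero_apply, ofReal_eq_zero] at hkx ⊢
  rcases hx.eq_or_lt with rfl | hx
  · simp [zero_rpow hm]
  · exact mul_nonpos_of_nonneg_of_nonpos (by positivity)
      (nonpos_of_mul_nonpos_right hkx (rpow_pos_of_pos hx k))

theorem ae_eq_of_le_of_setLIntegral_eq {α : Type*} [MeasurableSpace α] {μ : Measure α}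
    {s : Set α} (hs : MeasurableSet s) {u v : α → ℝ} (hv : Measurable v)
    (hu0 : ∀ x ∈ s, 0 ≤ u x) (huv : ∀ x ∈ s, u x ≤ v x)
    (hfin : ∫⁻ x in s, ENNReal.ofReal (u x) ∂μ ≠ ∞)
    (heq : ∫⁻ x in s, ENNReal.ofReal (v x) ∂μ = ∫⁻ x in s, ENNReal.ofReal (u x) ∂μ) :
    ∀ᵐ x ∂μ, x ∈ s → u x = v x := by
  have hle : (fun x => ENNReal.ofReal (u x)) ≤ᵐ[μ.restrict s] fun x => ENNReal.ofReal (v x) :=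
    (ae_restrict_iff' hs).2 (ae_of_all _ fun x hx => ofReal_le_ofReal (huv x hx))
  have hae := ae_eq_of_ae_le_of_lintegral_le hle hfin (by fun_prop) heq.le
  filter_upwards [(ae_restrict_iff' hs).1 hae] with x hx hxs
  exact (ofReal_eq_ofReal_iff (hu0 x hxs) ((hu0 x hxs).trans (huv x hxs))).1 (hx hxs)

theorem rpow_sub_rpow_mul_nonpos {x y r d : ℝ} (hx : 0 ≤ x) (hy : 0 ≤ y) (hr : 0 < r)
    (h : (x - y) * d ≤ 0) : (x ^ r - y ^ r) * d ≤ 0 := by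
  rcases lt_trichotomy x y with hxy | rfl | hxy
  · exact mul_nonpos_of_nonpos_of_nonneg (sub_nonpos.2 (rpow_le_rpow hx hxy.le hr.le))
      (nonneg_of_mul_nonpos_right h (sub_neg.2 hxy))
  · simp
  · exact mul_nonpos_of_nonneg_of_nonpos (sub_nonneg.2 (rpow_le_rpow hy hxy.le hr.le))
      (nonpos_of_mul_nonpos_right h (sub_pos.2 hxy))

section Crossing

variable {f g : ℝ → ℝ} {k m x₀ x a b : ℝ}

theorem rpow_mul_add_le_of_crossing (hk : 0 ≤ k) (hkm : k < m) (hx₀ : 0 ≤ x₀) (hx : 0 ≤ x)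
    (h : (x - x₀) * (a - b) ≤ 0) :
    x ^ m * a + x₀ ^ (m - k) * (x ^ k * b) ≤ x ^ m * b + x₀ ^ (m - k) * (x ^ k * a) := by
  have hsplit : x ^ m = x ^ k * x ^ (m - k) := by
    rw [← rpow_add' hx (by linarith), add_sub_cancel]
  have hsign := rpow_sub_rpow_mul_nonpos hx hx₀ (sub_pos.2 hkm) h
  rw [hsplit]
  nlinarith [mul_nonpos_of_nonneg_of_nonpos (rpow_nonneg hx k) hsign]

theorem eq_of_rpow_mul_add_eq (hkm : k < m) (hx₀ : 0 ≤ x₀) (hx : 0 < x) (hne : x ≠ x₀)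
    (h : x ^ m * a + x₀ ^ (m - k) * (x ^ k * b) = x ^ m * b + x₀ ^ (m - k) * (x ^ k * a)) :
    a = b := by
  have hsplit : x ^ m = x ^ k * x ^ (m - k) := by
    rw [← rpow_add hx, add_sub_cancel]
  have hpow : x ^ (m - k) ≠ x₀ ^ (m - k) := fun hxx =>
    hne ((rpow_left_injOn (sub_pos.2 hkm).ne').eq_iff hx.le hx₀ |>.1 hxx)
  have hprod : x ^ k * (x ^ (m - k) - x₀ ^ (m - k)) * (a - b) = 0 := by
    rw [hsplit] at h; linear_combination h
  rcases mul_eq_zero.1 hprod with h' | h'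
  · exact absurd h' (mul_ne_zero (rpow_pos_of_pos hx k).ne' (sub_ne_zero.2 hpow))
  · exact sub_eq_zero.1 h'

theorem setLIntegral_ofReal_rpow_mul_add (hf : Measurable f) (hf0 : ∀ x, 0 ≤ x → 0 ≤ f x)
    (hg0 : ∀ x, 0 ≤ x → 0 ≤ g x) {T : ℝ} (hT : 0 ≤ T) :
    ∫⁻ x in Ici (0 : ℝ), ENNReal.ofReal (x ^ m * f x + T * (x ^ k * g x)) =
      (∫⁻ x in Ici (0 : ℝ), ENNReal.ofReal (x ^ m * f x)) +
        ENNReal.ofReal T * ∫⁻ x in Ici (0 : ℝ), ENNReal.ofReal (x ^ k * g x) := by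
  rw [setLIntegral_congr_fun measurableSet_Ici fun x (hx : 0 ≤ x) => by
      rw [ofReal_add (mul_nonneg (rpow_nonneg hx m) (hf0 x hx))
        (mul_nonneg hT (mul_nonneg (rpow_nonneg hx k) (hg0 x hx))), ofReal_mul hT],
    lintegral_add_left (by fun_prop), lintegral_const_mul' _ _ ofReal_ne_top]

theorem lintegral_rpow_le_of_crossing (hf : Measurable f) (hg : Measurable g)
    (hf0 : ∀ x, 0 ≤ x → 0 ≤ f x) (hg0 : ∀ x, 0 ≤ x → 0 ≤ g x) (hk : 0 ≤ k)
    (hkm : k < m) (hx₀ : 0 ≤ x₀) (hcross : ∀ x, 0 ≤ x → (x - x₀) * (f x - g x) ≤ 0)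
    (hI : ∫⁻ x in Ici (0 : ℝ), ENNReal.ofReal (x ^ k * f x) =
      ∫⁻ x in Ici (0 : ℝ), ENNReal.ofReal (x ^ k * g x))
    (hfin : ∫⁻ x in Ici (0 : ℝ), ENNReal.ofReal (x ^ k * g x) ≠ ∞) :
    ∫⁻ x in Ici (0 : ℝ), ENNReal.ofReal (x ^ m * f x) ≤
      ∫⁻ x in Ici (0 : ℝ), ENNReal.ofReal (x ^ m * g x) := by
  have h := setLIntegral_mono (μ := volume) (s := Ici 0)
    (f := fun x => ENNReal.ofReal (x ^ m * f x + x₀ ^ (m - k) * (x ^ k * g x)))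
    (g := fun x => ENNReal.ofReal (x ^ m * g x + x₀ ^ (m - k) * (x ^ k * f x))) (by fun_prop)
    fun x hx => ofReal_le_ofReal (rpow_mul_add_le_of_crossing hk hkm hx₀ hx (hcross x hx))
  rw [setLIntegral_ofReal_rpow_mul_add hf hf0 hg0 (rpow_nonneg hx₀ _),
    setLIntegral_ofReal_rpow_mul_add hg hg0 hf0 (rpow_nonneg hx₀ _), hI] at h
  exact (ENNReal.add_le_add_iff_right (mul_ne_top ofReal_ne_top hfin)).1 h

theorem ae_eq_of_crossing_of_lintegral_eq (hf : Measurable f) (hg : Measurable g)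
    (hf0 : ∀ x, 0 ≤ x → 0 ≤ f x) (hg0 : ∀ x, 0 ≤ x → 0 ≤ g x) (hk : 0 ≤ k)
    (hkm : k < m) (hx₀ : 0 ≤ x₀) (hcross : ∀ x, 0 ≤ x → (x - x₀) * (f x - g x) ≤ 0)
    (hIk : ∫⁻ x in Ici (0 : ℝ), ENNReal.ofReal (x ^ k * f x) =
      ∫⁻ x in Ici (0 : ℝ), ENNReal.ofReal (x ^ k * g x))
    (hIm : ∫⁻ x in Ici (0 : ℝ), ENNReal.ofReal (x ^ m * f x) =
      ∫⁻ x in Ici (0 : ℝ), ENNReal.ofReal (x ^ m * g x))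
    (hfink : ∫⁻ x in Ici (0 : ℝ), ENNReal.ofReal (x ^ k * g x) ≠ ∞)
    (hfinm : ∫⁻ x in Ici (0 : ℝ), ENNReal.ofReal (x ^ m * g x) ≠ ∞) :
    ∀ᵐ x, 0 < x → f x = g x := by
  have hae := ae_eq_of_le_of_setLIntegral_eq measurableSet_Ici (by fun_prop)
    (fun x hx => add_nonneg (mul_nonneg (rpow_nonneg hx _) (hf0 x hx))
      (mul_nonneg (rpow_nonneg hx₀ _) (mul_nonneg (rpow_nonneg hx _) (hg0 x hx))))
    (fun x hx => rpow_mul_add_le_of_crossing hk hkm hx₀ hx (hcross x hx))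
    (by
      rw [setLIntegral_ofReal_rpow_mul_add hf hf0 hg0 (rpow_nonneg hx₀ _), hIm]
      exact add_ne_top.2 ⟨hfinm, mul_ne_top ofReal_ne_top hfink⟩)
    (by rw [setLIntegral_ofReal_rpow_mul_add hf hf0 hg0 (rpow_nonneg hx₀ _),
      setLIntegral_ofReal_rpow_mul_add hg hg0 hf0 (rpow_nonneg hx₀ _), hIk, hIm])
  filter_upwards [hae, Measure.ae_ne volume x₀] with x hx hne hxpos
  exact eq_of_rpow_mul_add_eq hkm hx₀ hxpos hne (hx hxpos.le)

end Crossing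

section LogConcave

variable {f : ℝ → ℝ} {c : ℝ}

theorem antitoneOn_rpow_inv_of_logConcave (hf0 : f 0 = 1) (hnn : ∀ x, 0 ≤ x → 0 ≤ f x)
    (hlc : ∀ x y : ℝ, 0 ≤ x → 0 ≤ y → ∀ l : ℝ, 0 < l → l < 1 →
      f x ^ l * f y ^ (1 - l) ≤ f (l * x + (1 - l) * y)) :
    AntitoneOn (fun x => f x ^ x⁻¹) (Ioi 0) := by
  intro x (hx : 0 < x) y (hy : 0 < y) hxy
  dsimp only
  rcases hxy.eq_or_lt with rfl | hxy
  · rfl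
  have h := hlc 0 y le_rfl hy.le (1 - x / y) (by linarith [(div_lt_one hy).2 hxy])
    (by linarith [div_pos hx hy])
  rw [hf0, Real.one_rpow, one_mul, _root_.sub_sub_cancel, mul_zero, zero_add,
    div_mul_cancel₀ _ hy.ne'] at h
  calc f y ^ y⁻¹ = (f y ^ (x / y)) ^ x⁻¹ := by
        rw [← rpow_mul (hnn y hy.le)]; congr 1; field_simp
    _ ≤ f x ^ x⁻¹ := rpow_le_rpow (rpow_nonneg (hnn y hy.le) _) h (by positivity)

theorem exp_neg_mul_rpow_inv {x : ℝ} (hx : x ≠ 0) : exp (-c * x) ^ x⁻¹ = exp (-c) := by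
  rw [← exp_mul, mul_inv_cancel_right₀ hx]

theorem exp_neg_mul_le_iff {a x : ℝ} (ha : 0 ≤ a) (hx : 0 < x) :
    exp (-c * x) ≤ a ↔ exp (-c) ≤ a ^ x⁻¹ := by
  rw [← exp_neg_mul_rpow_inv hx.ne', rpow_le_rpow_iff (exp_nonneg _) ha (inv_pos.2 hx)]

theorem eq_exp_neg_mul_of_ae (hf0 : f 0 = 1) (hnn : ∀ x, 0 ≤ x → 0 ≤ f x)
    (hφ : AntitoneOn (fun x => f x ^ x⁻¹) (Ioi 0))
    (hae : ∀ᵐ x, 0 < x → f x = exp (-c * x)) :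
    ∀ x, 0 ≤ x → f x = exp (-c * x) := by
  have hφ_eq : ∀ a b, 0 < a → a < b → ∃ y ∈ Ioo a b, f y ^ y⁻¹ = exp (-c) := by
    intro a b ha hab
    obtain ⟨y, hy, hfy⟩ := Measure.exists_mem_of_measure_ne_zero_of_ae (s := Ioo a b)
      (by simp [hab]) (ae_restrict_of_ae hae)
    exact ⟨y, hy, by rw [hfy (ha.trans hy.1), exp_neg_mul_rpow_inv (ha.trans hy.1).ne']⟩
  intro x hx
  rcases hx.eq_or_lt with rfl | hx
  · simp [hf0]
  obtain ⟨y, hy, hφy⟩ := hφ_eq x (x + 1) hx (by linarith)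
  obtain ⟨z, hz, hφz⟩ := hφ_eq (x / 2) x (by positivity) (by linarith)
  have hφx : f x ^ x⁻¹ = exp (-c) := le_antisymm
    (hφz ▸ hφ ((half_pos hx).trans hz.1) hx hz.2.le) (hφy ▸ hφ hx (hx.trans hy.1) hy.1.le)
  calc f x = (f x ^ x⁻¹) ^ x := (rpow_inv_rpow (hnn x hx.le) hx.ne').symm
    _ = exp (-c * x) := by rw [hφx, ← exp_mul]

theorem eq_exp_neg_mul_of_le_of_lintegral_eq {k : ℝ} (hf : Measurable f) (hf0 : f 0 = 1)
    (hnn : ∀ x, 0 ≤ x → 0 ≤ f x) (hφ : AntitoneOn (fun x => f x ^ x⁻¹) (Ioi 0))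
    (hle : ∀ x, 0 ≤ x → exp (-c * x) ≤ f x)
    (hI : ∫⁻ x in Ici (0 : ℝ), ENNReal.ofReal (x ^ k * f x) =
      ∫⁻ x in Ici (0 : ℝ), ENNReal.ofReal (x ^ k * exp (-c * x)))
    (hfin : ∫⁻ x in Ici (0 : ℝ), ENNReal.ofReal (x ^ k * exp (-c * x)) ≠ ∞) :
    ∀ x, 0 ≤ x → f x = exp (-c * x) := by
  have hae := ae_eq_of_le_of_setLIntegral_eq measurableSet_Ici (u := fun x => x ^ k * exp (-c * x))
    (v := fun x => x ^ k * f x) (by fun_prop) (fun x (hx : 0 ≤ x) => by positivity)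
    (fun x hx => mul_le_mul_of_nonneg_left (hle x hx) (rpow_nonneg hx k)) hfin hI
  refine eq_exp_neg_mul_of_ae hf0 hnn hφ ?_
  filter_upwards [hae] with x hx hxpos
  exact (mul_left_cancel₀ (rpow_pos_of_pos hxpos k).ne' (hx hxpos.le)).symm

theorem exists_crossing_exp_neg_mul {k : ℝ} (hf : Measurable f) (hf0 : f 0 = 1)
    (hnn : ∀ x, 0 ≤ x → 0 ≤ f x) (hφ : AntitoneOn (fun x => f x ^ x⁻¹) (Ioi 0))
    (hI : ∫⁻ x in Ici (0 : ℝ), ENNReal.ofReal (x ^ k * f x) =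
      ∫⁻ x in Ici (0 : ℝ), ENNReal.ofReal (x ^ k * exp (-c * x)))
    (hfin : ∫⁻ x in Ici (0 : ℝ), ENNReal.ofReal (x ^ k * exp (-c * x)) ≠ ∞) :
    ∃ x₀, 0 ≤ x₀ ∧ ∀ x, 0 ≤ x → (x - x₀) * (f x - exp (-c * x)) ≤ 0 := by
  set S := {x | 0 ≤ x ∧ exp (-c * x) ≤ f x}
  have hS0 : (0 : ℝ) ∈ S := ⟨le_rfl, by simp [hf0]⟩
  have hbelow : ∀ x y, 0 ≤ x → x < y → y ∈ S → exp (-c * x) ≤ f x := by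
    rintro x y hx hxy ⟨hy, hfy⟩
    rcases hx.eq_or_lt with rfl | hx
    · simp [hf0]
    rw [exp_neg_mul_le_iff (hnn x hx.le) hx]
    exact ((exp_neg_mul_le_iff (hnn y hy) (hx.trans hxy)).1 hfy).trans
      (hφ hx (hx.trans hxy) hxy.le)
  by_cases hS : BddAbove S
  · refine ⟨sSup S, le_csSup hS hS0, fun x hx => ?_⟩
    by_cases hfx : exp (-c * x) ≤ f x
    · exact mul_nonpos_of_nonpos_of_nonneg (sub_nonpos.2 (le_csSup hS ⟨hx, hfx⟩))
        (sub_nonneg.2 hfx)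
    · have hx₀ : sSup S ≤ x := not_lt.1 fun hlt => by
        obtain ⟨y, hyS, hxy⟩ := exists_lt_of_lt_csSup ⟨0, hS0⟩ hlt
        exact hfx (hbelow x y hx hxy hyS)
      exact mul_nonpos_of_nonneg_of_nonpos (sub_nonneg.2 hx₀) (sub_nonpos.2 (not_le.1 hfx).le)
  · have hle : ∀ x, 0 ≤ x → exp (-c * x) ≤ f x := fun x hx => by
      obtain ⟨y, hyS, hxy⟩ := not_bddAbove_iff.1 hS x
      exact hbelow x y hx hxy hyS
    have hfeq := eq_exp_neg_mul_of_le_of_lintegral_eq hf hf0 hnn hφ hle hI hfin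
    exact ⟨0, le_rfl, fun x hx => by rw [hfeq x hx, sub_self, mul_zero]⟩

end LogConcave

theorem stmt11 (k m : ℝ) (hk : 0 ≤ k) (hkm : k < m)
    (f : ℝ → ℝ) (hmeas : Measurable f)
    (hrange : ∀ x : ℝ, 0 ≤ x → f x ∈ Set.Icc (0 : ℝ) 1)
    (hf0 : f 0 = 1)
    (hlc : ∀ x y : ℝ, 0 ≤ x → 0 ≤ y → ∀ l : ℝ, 0 < l → l < 1 →
      f x ^ l * f y ^ (1 - l) ≤ f (l * x + (1 - l) * y)) :
    momInt f m ^ (1 / (m + 1)) ≤ momInt f k ^ (1 / (k + 1)) ∧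
    (0 < (∫⁻ x in Set.Ici (0 : ℝ), ENNReal.ofReal (x ^ k * f x)) →
      (∫⁻ x in Set.Ici (0 : ℝ), ENNReal.ofReal (x ^ k * f x)) < ∞ →
      (momInt f m ^ (1 / (m + 1)) = momInt f k ^ (1 / (k + 1)) ↔
        ∃ c : ℝ, 0 < c ∧ ∀ x : ℝ, 0 ≤ x → f x = Real.exp (-c * x))) := by
  have hm : 0 < m := hk.trans_lt hkm
  have hnn : ∀ x, 0 ≤ x → 0 ≤ f x := fun x hx => (hrange x hx).1
  have hφ := antitoneOn_rpow_inv_of_logConcave hf0 hnn hlc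
  rcases eq_or_ne (∫⁻ x in Ici (0 : ℝ), ENNReal.ofReal (x ^ k * f x)) 0 with h0 | h0
  · refine ⟨?_, fun hpos => absurd h0 hpos.ne'⟩
    rw [momInt_eq_zero_of_lintegral_eq_zero hmeas hm.ne' h0, zero_rpow_of_pos (by positivity)]
    exact zero_le
  rcases eq_or_ne (∫⁻ x in Ici (0 : ℝ), ENNReal.ofReal (x ^ k * f x)) ∞ with htop | htop
  · refine ⟨?_, fun _ hlt => absurd htop hlt.ne⟩
    rw [momInt, momInt, htop, top_div_of_ne_top ofReal_ne_top, top_rpow_of_pos (by positivity)]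
    exact le_top
  obtain ⟨c, hc, hIc⟩ := exists_lintegral_rpow_mul_exp_neg_mul_eq (p := k) (by linarith) h0 htop
  have hmom_k : momInt f k ^ (1 / (k + 1)) = momInt (fun x => exp (-c * x)) m ^ (1 / (m + 1)) := by
    rw [momInt_exp_neg_mul_rpow (by linarith) hc,
      ← momInt_exp_neg_mul_rpow (p := k) (by linarith) hc]
    simp only [momInt, hIc]
  obtain ⟨x₀, hx₀, hcross⟩ :=
    exists_crossing_exp_neg_mul hmeas hf0 hnn hφ hIc.symm (hIc ▸ htop)
  have hexp_nn : ∀ x, 0 ≤ x → 0 ≤ exp (-c * x) := fun x _ => exp_nonneg _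
  refine ⟨?_, fun _ _ => ⟨fun heq => ?_, ?_⟩⟩
  · exact hmom_k ▸ momInt_rpow_le_of_lintegral_le (by linarith) (lintegral_rpow_le_of_crossing
      hmeas (by fun_prop) hnn hexp_nn hk hkm hx₀ hcross hIc.symm (hIc ▸ htop))
  · refine ⟨c, hc, eq_exp_neg_mul_of_ae hf0 hnn hφ (ae_eq_of_crossing_of_lintegral_eq hmeas
      (by fun_prop) hnn hexp_nn hk hkm hx₀ hcross hIc.symm
      (lintegral_eq_of_momInt_rpow_eq (by linarith) (heq.trans hmom_k)) (hIc ▸ htop) ?_)⟩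
    rw [lintegral_rpow_mul_exp_neg_mul (by linarith) hc]
    exact ofReal_ne_top
  · rintro ⟨c', hc', hfc'⟩
    rw [momInt_congr hfc', momInt_congr hfc', momInt_exp_neg_mul_rpow (by linarith) hc',
      momInt_exp_neg_mul_rpow (by linarith) hc']
end
end

section
/- Let n ≥ 1 and let f ∈ QC₀(ℝⁿ) be regular. Then the map V_ف : [0,1] → [0,∞] defined by V_f(t) = vol({x : f(x) ≥ t}) is strictly decreasing, continuous (with respect to the order topology on [0,∞]), and a bijection from [0,1] onto [0,∞]; in particular V_f(0) = ∞, V_f(1) = 0, and 0 < V_f(t) < ∞ for every t ∈ (0,1). -/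
open MeasureTheory ENNReal Filter Topology

noncomputable section

def QuasiConcave {n : ℕ} (f : En n → ℝ≥0∞) : Prop :=
  ∀ x y : En n, ∀ l : ℝ, 0 < l → l < 1 →
    min (f x) (f y) ≤ f (l • x + (1 - l) • y)

def QC {n : ℕ} (f : En n → ℝ≥0∞) : Prop :=
  UpperSemicontinuous f ∧ QuasiConcave f ∧ ∀ x, f x ≠ ∞

def QC0 {n : ℕ} (f : En n → ℝ≥0∞) : Prop :=
  QC f ∧ f 0 = 1 ∧ ∀ x, f x ≤ 1

/-- `f` is regular: continuous, strictly radially decreasing away from the origin, and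
vanishing at infinity. -/
def RegularQC {n : ℕ} (f : En n → ℝ≥0∞) : Prop :=
  Continuous f ∧
  (∀ x : En n, x ≠ 0 → ∀ l : ℝ, 0 < l → l < 1 → f x < f (l • x)) ∧
  Filter.Tendsto f (Filter.cocompact (En n)) (𝓝 0)

open Set

/-!
Superlevel sets of `f` are convex by quasi-concavity and, at positive levels, compact because `f`
vanishes at infinity; so `V_f` is finite on `(0, 1]`, while `V_f 0 = vol ℝⁿ = ∞`. Strict radial
decrease puts every point of a level set `{f = t}` other than the origin on the frontier of
`{t ≤ f}`, and frontiers of convex sets are Lebesgue-null. Hence all level sets are null, and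
continuity of the measure from above and from below makes `V_f` continuous; in particular
`V_f 1 = vol {f = 1} = 0`. As ℝⁿ is connected, `f` takes every value in `(0, 1]`, so between two
levels `s < t` lies the nonempty open set `{s < f < t}`, of positive measure: `V_f` is strictly
decreasing, and the intermediate value theorem makes it onto `[0, ∞]`.
-/

section Superlevel

variable {α : Type*} [MeasurableSpace α] {μ : Measure α} {f : α → ℝ≥0∞} {t : ℝ≥0∞}

theorem tendsto_measure_superlevel_nhdsGT (μ : Measure α) (f : α → ℝ≥0∞) (t : ℝ≥0∞) :
    Tendsto (fun r => μ {x | r ≤ f x}) (𝓝[>] t) (𝓝 (μ {x | t < f x})) := by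
  have hU : ⋃ r : Ioi t, {x | (r : ℝ≥0∞) ≤ f x} = {x | t < f x} := by
    ext x
    simp only [mem_iUnion, Subtype.exists, mem_Ioi, exists_prop, mem_ofPred_eq]
    refine ⟨fun ⟨r, htr, hr⟩ => htr.trans_le hr, fun h => ?_⟩
    obtain ⟨r, htr, hr⟩ := exists_between h
    exact ⟨r, htr, hr.le⟩
  have : (atBot : Filter (Ioi t)).IsCountablyGenerated := by
    rw [← comap_coe_Ioi_nhdsGT t]
    infer_instance
  rw [← map_coe_Ioi_atBot t, tendsto_map'_iff, ← hU]
  exact tendsto_measure_iUnion_atBot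
    fun r r' h x hx => show (r : ℝ≥0∞) ≤ f x from le_trans h hx

theorem tendsto_measure_superlevel_nhdsLT (hf : Measurable f)
    (hfin : ∀ᶠ r in 𝓝[<] t, μ {x | r ≤ f x} ≠ ∞) :
    Tendsto (fun r => μ {x | r ≤ f x}) (𝓝[<] t) (𝓝 (μ {x | t ≤ f x})) := by
  rcases (𝓝[<] t).eq_or_neBot with h | _
  · rw [h]
    exact tendsto_bot
  obtain ⟨r₀, hr₀, hr₀t⟩ := (hfin.and self_mem_nhdsWithin).exists
  have hI : ⋂ r : Iio t, {x | (r : ℝ≥0∞) ≤ f x} = {x | t ≤ f x} := by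
    ext x
    simp only [mem_iInter, Subtype.forall, mem_Iio, mem_ofPred_eq]
    exact ⟨le_of_forall_lt_imp_le_of_dense, fun h r hr => hr.le.trans h⟩
  have : (atTop : Filter (Iio t)).IsCountablyGenerated := by
    rw [← comap_coe_Iio_nhdsLT t]
    infer_instance
  rw [← map_coe_Iio_atTop t, tendsto_map'_iff, ← hI]
  exact tendsto_measure_iInter_atTop
    (fun r => (measurableSet_le measurable_const hf).nullMeasurableSet)
    (fun r r' h x hx => show (r : ℝ≥0∞) ≤ f x from le_trans h hx) ⟨⟨r₀, hr₀t⟩, hr₀⟩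

theorem measure_superlevel_gt_eq (hnull : μ {x | f x = t} = 0) :
    μ {x | t < f x} = μ {x | t ≤ f x} := by
  refine le_antisymm (measure_mono fun x (hx : t < f x) => hx.le) ?_
  calc μ {x | t ≤ f x} ≤ μ ({x | t < f x} ∪ {x | f x = t}) :=
        measure_mono fun x hx => (eq_or_lt_of_le hx).elim (Or.inr ∘ Eq.symm) Or.inl
    _ ≤ μ {x | t < f x} := (measure_union_le _ _).trans_eq (by rw [hnull, add_zero])

theorem continuousAt_measure_superlevel (hf : Measurable f)
    (hfin : ∀ r, 0 < r → μ {x | r ≤ f x} ≠ ∞) (hnull : μ {x | f x = t} = 0) :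
    ContinuousAt (fun r => μ {x | r ≤ f x}) t := by
  have hfin' : ∀ᶠ r in 𝓝[<] t, μ {x | r ≤ f x} ≠ ∞ := by
    rcases eq_zero_or_pos t with rfl | ht
    · simp
    · filter_upwards [Ioo_mem_nhdsLT ht] with r hr using hfin r hr.1
  refine continuousAt_iff_continuous_left'_right'.2
    ⟨tendsto_measure_superlevel_nhdsLT hf hfin', ?_⟩
  have := tendsto_measure_superlevel_nhdsGT μ f t
  rwa [measure_superlevel_gt_eq hnull] at this

end Superlevel

section Radial

variable {E : Type*} [NormedAddCommGroup E] [NormedSpace ℝ E]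

def StrictAntiAlongRays {β : Type*} [Preorder β] (f : E → β) : Prop :=
  ∀ x : E, x ≠ 0 → ∀ l : ℝ, 0 < l → l < 1 → f x < f (l • x)

variable {f : E → ℝ≥0∞}

theorem StrictAntiAlongRays.apply_smul_lt (hf : StrictAntiAlongRays f) {x : E} (hx : x ≠ 0)
    {r : ℝ} (hr : 1 < r) : f (r • x) < f x := by
  have hr₀ : r ≠ 0 := (zero_lt_one.trans hr).ne'
  simpa [smul_smul, inv_mul_cancel₀ hr₀] using
    hf (r • x) (smul_ne_zero hr₀ hx) r⁻¹ (by positivity) (inv_lt_one_of_one_lt₀ hr)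

theorem StrictAntiAlongRays.notMem_interior_superlevel (hf : StrictAntiAlongRays f) {x : E}
    (hx : x ≠ 0) : x ∉ interior {y | f x ≤ f y} := by
  intro hint
  have hlim : Tendsto (fun r : ℝ => r • x) (𝓝[>] 1) (𝓝 x) :=
    ((continuous_id.smul continuous_const).tendsto' 1 x (one_smul ℝ x)).mono_left
      nhdsWithin_le_nhds
  obtain ⟨r, hrx, hr⟩ :=
    ((hlim.eventually (isOpen_interior.mem_nhds hint)).and self_mem_nhdsWithin).exists
  exact (hf.apply_smul_lt hx hr).not_ge (interior_subset (s := {y | f x ≤ f y}) hrx)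

theorem StrictAntiAlongRays.levelSet_subset (hf : StrictAntiAlongRays f) (t : ℝ≥0∞) :
    {x | f x = t} ⊆ frontier {x | t ≤ f x} ∪ {0} := by
  rintro x (rfl : f x = t)
  by_cases hx : x = 0
  · exact Or.inr hx
  · exact Or.inl ⟨subset_closure (le_refl (f x)), hf.notMem_interior_superlevel hx⟩

theorem StrictAntiAlongRays.measure_levelSet_eq_zero [MeasurableSpace E] [BorelSpace E]
    [FiniteDimensional ℝ E] [Nontrivial E] (μ : Measure E) [μ.IsAddHaarMeasure]
    (hf : StrictAntiAlongRays f) {t : ℝ≥0∞} (hconv : Convex ℝ {x | t ≤ f x}) :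
    μ {x | f x = t} = 0 :=
  measure_mono_null (hf.levelSet_subset t)
    (measure_union_null (hconv.addHaar_frontier μ) (measure_singleton 0))

end Radial

section VanishingAtInfinity

variable {X : Type*} [TopologicalSpace X] {f : X → ℝ≥0∞}

theorem isCompact_superlevel_of_tendsto_cocompact (hf : UpperSemicontinuous f)
    (hlim : Tendsto f (cocompact X) (𝓝 0)) {t : ℝ≥0∞} (ht : 0 < t) :
    IsCompact {x | t ≤ f x} := by
  obtain ⟨K, hK, hKc⟩ := mem_cocompact.1 (hlim (Iio_mem_nhds ht))
  exact hK.of_isClosed_subset (hf.isClosed_preimage t) fun x (hx : t ≤ f x) =>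
    compl_subset_comm.1 hKc (not_lt.2 hx)

theorem exists_apply_eq_of_tendsto_cocompact [PreconnectedSpace X] [NoncompactSpace X]
    (hf : Continuous f) (hlim : Tendsto f (cocompact X) (𝓝 0)) (a : X) {c : ℝ≥0∞}
    (hc : 0 < c) (hca : c ≤ f a) : ∃ x, f x = c := by
  obtain ⟨b, hb⟩ := (hlim.eventually (Iio_mem_nhds hc)).exists
  exact intermediate_value_univ b a hf ⟨le_of_lt hb, hca⟩

variable [MeasurableSpace X] [OpensMeasurableSpace X] (μ : Measure X)

theorem measure_superlevel_lt_of_mem_Ioo [μ.IsOpenPosMeasure] (hf : Continuous f)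
    {s t : ℝ≥0∞} {a : X} (ha : f a ∈ Ioo s t) (hfin : μ {x | t ≤ f x} ≠ ∞) :
    μ {x | t ≤ f x} < μ {x | s ≤ f x} := by
  have hU : 0 < μ (f ⁻¹' Ioo s t) := (isOpen_Ioo.preimage hf).measure_pos μ ⟨a, ha⟩
  have hdisj : Disjoint {x | t ≤ f x} (f ⁻¹' Ioo s t) :=
    disjoint_right.2 fun x hx (hx' : t ≤ f x) => hx.2.not_ge hx'
  calc μ {x | t ≤ f x} < μ {x | t ≤ f x} + μ (f ⁻¹' Ioo s t) :=
        ENNReal.lt_add_right hfin hU.ne'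
    _ = μ ({x | t ≤ f x} ∪ f ⁻¹' Ioo s t) :=
        (measure_union hdisj ((isOpen_Ioo.preimage hf).measurableSet)).symm
    _ ≤ μ {x | s ≤ f x} := measure_mono <| union_subset
        (fun x (hx : t ≤ f x) => (ha.1.trans ha.2).le.trans hx) fun x hx => hx.1.le

theorem strictAntiOn_measure_superlevel [PreconnectedSpace X] [NoncompactSpace X]
    [μ.IsOpenPosMeasure] [IsFiniteMeasureOnCompacts μ] (hf : Continuous f)
    (hlim : Tendsto f (cocompact X) (𝓝 0)) (a : X) :
    StrictAntiOn (fun t => μ {x | t ≤ f x}) (Iic (f a)) := by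
  intro s _ t ht hst
  obtain ⟨c, hsc, hct⟩ := exists_between hst
  obtain ⟨b, rfl⟩ := exists_apply_eq_of_tendsto_cocompact hf hlim a
    (zero_le.trans_lt hsc) (hct.trans_le ht).le
  exact measure_superlevel_lt_of_mem_Ioo μ hf ⟨hsc, hct⟩
    (isCompact_superlevel_of_tendsto_cocompact hf.upperSemicontinuous hlim
      (zero_le.trans_lt hst)).measure_lt_top.ne

end VanishingAtInfinity

theorem QuasiConcave.convex_superlevel {n : ℕ} {f : En n → ℝ≥0∞} (hf : QuasiConcave f)
    (t : ℝ≥0∞) : Convex ℝ {x | t ≤ f x} := by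
  intro x hx y hy a b ha hb hab
  obtain rfl | ha' := ha.eq_or_lt
  · simp_all
  obtain rfl | hb' := hb.eq_or_lt
  · simp_all
  obtain rfl : b = 1 - a := by linarith
  exact (le_min hx hy).trans (hf x y a ha' (by linarith))

theorem stmt14 (n : ℕ) (hn : 1 ≤ n) (f : En n → ℝ≥0∞)
    (hf : QC0 f) (hreg : RegularQC f) :
    StrictAntiOn (fun t : ℝ≥0∞ => volume {x : En n | t ≤ f x}) (Set.Icc 0 1) ∧
    ContinuousOn (fun t : ℝ≥0∞ => volume {x : En n | t ≤ f x}) (Set.Icc 0 1) ∧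
    Set.BijOn (fun t : ℝ≥0∞ => volume {x : En n | t ≤ f x}) (Set.Icc 0 1) Set.univ ∧
    volume {x : En n | (0 : ℝ≥0∞) ≤ f x} = ∞ ∧
    volume {x : En n | (1 : ℝ≥0∞) ≤ f x} = 0 ∧
    ∀ t : ℝ≥0∞, 0 < t → t < 1 →
      0 < volume {x : En n | t ≤ f x} ∧ volume {x : En n | t ≤ f x} < ∞ := by
  obtain ⟨⟨husc, hqc, -⟩, hf0, hle1⟩ := hf
  obtain ⟨hcont, hrad, hlim⟩ := hreg
  have : NeZero n := ⟨by omega⟩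
  have hnull (t : ℝ≥0∞) : volume {x | f x = t} = 0 :=
    StrictAntiAlongRays.measure_levelSet_eq_zero volume hrad (hqc.convex_superlevel t)
  have hfin (t : ℝ≥0∞) (ht : 0 < t) : volume {x | t ≤ f x} < ∞ :=
    (isCompact_superlevel_of_tendsto_cocompact husc hlim ht).measure_lt_top
  have hV0 : volume {x : En n | (0 : ℝ≥0∞) ≤ f x} = ∞ := by simp
  have hV1 : volume {x : En n | (1 : ℝ≥0∞) ≤ f x} = 0 := by
    rw [← hnull 1]
    exact congrArg volume (ext fun x => (hle1 x).ge_iff_eq)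
  have hanti : StrictAntiOn (fun t => volume {x : En n | t ≤ f x}) (Icc 0 1) :=
    (strictAntiOn_measure_superlevel volume hcont hlim 0).mono (hf0 ▸ Icc_subset_Iic_self)
  have hcontOn : ContinuousOn (fun t => volume {x : En n | t ≤ f x}) (Icc 0 1) :=
    fun t _ => (continuousAt_measure_superlevel hcont.measurable
      (fun r hr => (hfin r hr).ne) (hnull t)).continuousWithinAt
  refine ⟨hanti, hcontOn, ⟨mapsTo_univ _ _, hanti.injOn, fun y _ => ?_⟩, hV0, hV1,
    fun t ht0 ht1 => ⟨?_, hfin t ht0⟩⟩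
  · exact intermediate_value_Icc' zero_le_one hcontOn ⟨hV1 ▸ zero_le, hV0 ▸ le_top⟩
  · exact hV1 ▸ hanti ⟨ht0.le, ht1.le⟩ ⟨zero_le_one, le_rfl⟩ ht1
end
end

section
/- Let n ≥ 1 and let f ∈ LC₀(ℝⁿ) satisfy 0 < vol({x : f(x) ≥ t}) < ∞ for every t ∈ (0,1). Then there exists an upper semicontinuous quasi-concave function f̃ : ℝⁿ → [0,1] such that for every t ∈ (0,1): {x : f̃(x) ≥ t} = c(t)·{x : f(x) ≥ t}, where c(t) = ( ωₙ (log(1/t))ⁿ / vol({f ≥ t}) )^{1/n}. In particular every superlevel set of f̃ is homothetic to the corresponding superlevel set of f, and vol({f̃ ≥ t}) = ωₙ (log(1/t))ⁿ = vol({M ≥ t}) for every t ∈ (0,1), where M(x) = e^{−|x|}. -/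
open MeasureTheory ENNReal Filter Topology Pointwise

noncomputable section

def LogConcaveE {n : ℕ} (f : En n → ℝ≥0∞) : Prop :=
  ∀ x y : En n, ∀ l : ℝ, 0 < l → l < 1 →
    f x ^ l * f y ^ (1 - l) ≤ f (l • x + (1 - l) • y)

def LC0 {n : ℕ} (f : En n → ℝ≥0∞) : Prop :=
  UpperSemicontinuous f ∧ LogConcaveE f ∧ f 0 = 1 ∧ ∀ x, f x ≤ 1

namespace Stmt17aux

variable {n : ℕ}

def K (f : En n → ℝ≥0∞) (t : ℝ) : Set (En n) := {x | ENNReal.ofReal t ≤ f x}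

noncomputable def c (f : En n → ℝ≥0∞) (t : ℝ) : ℝ :=
  ((volume (Metric.closedBall (0 : En n) (Real.log (1 / t)))).toReal /
      (volume (K f t)).toReal) ^ ((1 : ℝ) / (n : ℝ))

def L (f : En n → ℝ≥0∞) (t : ℝ) : Set (En n) := c f t • K f t

theorem K_closed {f : En n → ℝ≥0∞} (hf : UpperSemicontinuous f) (t : ℝ) :
    IsClosed (K f t) :=
  upperSemicontinuous_iff_isClosed_preimage.1 hf (ENNReal.ofReal t)

theorem K_antitone (f : En n → ℝ≥0∞) {s t : ℝ} (hst : s ≤ t) : K f t ⊆ K f s :=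
  fun _ hx => le_trans (ENNReal.ofReal_le_ofReal hst) hx

theorem zero_mem_K {f : En n → ℝ≥0∞} (hf : f 0 = 1) {t : ℝ} (ht : t ≤ 1) :
    (0 : En n) ∈ K f t := by
  simp only [K, Set.mem_setOf_eq, hf]
  exact ENNReal.ofReal_le_one.2 ht

theorem K_convex {f : En n → ℝ≥0∞} (hf : LogConcaveE f) {t : ℝ} (ht : 0 < t) :
    Convex ℝ (K f t) := by
  intro x hx y hy a b ha hb hab
  rcases eq_or_lt_of_le ha with rfl | ha'
  · have : b = 1 := by linarith
    subst this; simpa using hy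
  rcases eq_or_lt_of_le hb with rfl | hb'
  · have : a = 1 := by linarith
    subst this; simpa using hx
  have hb1 : b = 1 - a := by linarith
  subst hb1
  have h := hf x y a ha' (by linarith)
  refine le_trans ?_ h
  calc ENNReal.ofReal t = ENNReal.ofReal t ^ a * ENNReal.ofReal t ^ (1 - a) := by
        rw [← ENNReal.rpow_add _ _ (by simp [ht]) (by simp), add_sub_cancel,
          ENNReal.rpow_one]
    _ ≤ f x ^ a * f y ^ (1 - a) := by
        gcongr
        · exact hx
        · exact hy

end Stmt17aux

namespace Stmt17aux

variable {n : ℕ}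

theorem log_one_div_pos {t : ℝ} (h0 : 0 < t) (h1 : t < 1) : 0 < Real.log (1 / t) :=
  Real.log_pos (one_lt_one_div h0 h1)

theorem smul_K_subset {f : En n → ℝ≥0∞} (hf : LC0 f) {s t : ℝ} (hs : 0 < s)
    (hst : s < t) (ht : t < 1) :
    (Real.log (1 / t) / Real.log (1 / s)) • K f s ⊆ K f t := by
  obtain ⟨-, hlc, hf0, -⟩ := hf
  set l : ℝ := Real.log (1 / t) / Real.log (1 / s) with hl
  have hs1 : s < 1 := hst.trans ht
  have ht0 : 0 < t := hs.trans hst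
  have hlogs : 0 < Real.log (1 / s) := log_one_div_pos hs hs1
  have hlogt : 0 < Real.log (1 / t) := log_one_div_pos ht0 ht
  have hl0 : 0 < l := div_pos hlogt hlogs
  have hl1 : l < 1 := by
    rw [hl, div_lt_one hlogs]
    apply Real.log_lt_log (by positivity)
    exact one_div_lt_one_div_of_lt hs hst
  rintro - ⟨y, hy, rfl⟩
  have h := hlc y 0 l hl0 hl1
  simp only [smul_zero, add_zero, hf0, ENNReal.one_rpow, mul_one] at h
  refine le_trans ?_ h
  have hsl : s ^ l = t := by
    rw [Real.rpow_def_of_pos hs]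
    have : Real.log s * l = Real.log t := by
      rw [hl]
      have h1 : Real.log (1 / s) = -Real.log s := by rw [one_div, Real.log_inv]
      have h2 : Real.log (1 / t) = -Real.log t := by rw [one_div, Real.log_inv]
      have hsne : Real.log s ≠ 0 := by
        have := hlogs; rw [h1] at this; exact ne_of_lt (by linarith)
      rw [h1, h2, neg_div_neg_eq, mul_div_assoc', mul_comm]
      exact mul_div_cancel_right₀ _ hsne
    rw [this, Real.exp_log ht0]
  calc ENNReal.ofReal t = ENNReal.ofReal s ^ l := by
        rw [ENNReal.ofReal_rpow_of_pos hs, hsl]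
    _ ≤ f y ^ l := by gcongr; exact hy

end Stmt17aux

namespace Stmt17aux

variable {n : ℕ}

theorem B_eq (hn : 1 ≤ n) {t : ℝ} (h0 : 0 < t) (h1 : t < 1) :
    (volume (Metric.closedBall (0 : En n) (Real.log (1 / t)))).toReal =
      Real.log (1 / t) ^ n * (volume (Metric.ball (0 : En n) 1)).toReal := by
  rw [Measure.addHaar_closedBall volume 0 (log_one_div_pos h0 h1).le,
    finrank_euclideanSpace_fin, ENNReal.toReal_mul,
    ENNReal.toReal_ofReal (pow_nonneg (log_one_div_pos h0 h1).le n)]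

theorem c_pos (f : En n → ℝ≥0∞)
    (hvol : ∀ t : ℝ, 0 < t → t < 1 → 0 < volume (K f t) ∧ volume (K f t) < ∞)
    {t : ℝ} (h0 : 0 < t) (h1 : t < 1) : 0 < c f t := by
  apply Real.rpow_pos_of_pos
  apply div_pos
  · exact ENNReal.toReal_pos
      (Metric.measure_closedBall_pos volume _ (log_one_div_pos h0 h1)).ne'
      measure_closedBall_lt_top.ne
  · exact ENNReal.toReal_pos (hvol t h0 h1).1.ne' (hvol t h0 h1).2.ne

theorem c_antitone {f : En n → ℝ≥0∞} (hn : 1 ≤ n) (hf : LC0 f)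
    (hvol : ∀ t : ℝ, 0 < t → t < 1 → 0 < volume (K f t) ∧ volume (K f t) < ∞)
    {s t : ℝ} (hs : 0 < s) (hst : s < t) (ht : t < 1) : c f t ≤ c f s := by
  have ht0 : 0 < t := hs.trans hst
  have hs1 : s < 1 := hst.trans ht
  have hrs : 0 < Real.log (1 / s) := log_one_div_pos hs hs1
  have hrt : 0 < Real.log (1 / t) := log_one_div_pos ht0 ht
  set rs := Real.log (1 / s)
  set rt := Real.log (1 / t)
  set l : ℝ := rt / rs with hl
  have hl0 : 0 < l := div_pos hrt hrs
  have hVs : 0 < (volume (K f s)).toReal :=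
    ENNReal.toReal_pos (hvol s hs hs1).1.ne' (hvol s hs hs1).2.ne
  have hVt : 0 < (volume (K f t)).toReal :=
    ENNReal.toReal_pos (hvol t ht0 ht).1.ne' (hvol t ht0 ht).2.ne
  have hkey : l ^ n * (volume (K f s)).toReal ≤ (volume (K f t)).toReal := by
    have h1 : volume (l • K f s) ≤ volume (K f t) :=
      measure_mono (smul_K_subset hf hs hst ht)
    rw [Measure.addHaar_smul volume l (K f s), finrank_euclideanSpace_fin,
      abs_of_pos (by positivity)] at h1
    have h2 := ENNReal.toReal_le_toReal
      (by exact ENNReal.mul_ne_top ENNReal.ofReal_ne_top (hvol s hs hs1).2.ne)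
      (hvol t ht0 ht).2.ne |>.2 h1
    rwa [ENNReal.toReal_mul, ENNReal.toReal_ofReal (by positivity)] at h2
  unfold c
  apply Real.rpow_le_rpow (by positivity) _ (by positivity)
  rw [B_eq hn ht0 ht, B_eq hn hs hs1]
  rw [div_le_div_iff₀ hVt hVs]
  have h2 : rt ^ n = rs ^ n * l ^ n := by
    rw [← mul_pow]
    congr 1
    rw [hl]
    field_simp
  set U := (volume (Metric.ball (0 : En n) 1)).toReal with hU
  have hUnn : 0 ≤ U := ENNReal.toReal_nonneg
  calc rt ^ n * U * (volume (K f s)).toReal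
      = rs ^ n * U * (l ^ n * (volume (K f s)).toReal) := by rw [h2]; ring
    _ ≤ rs ^ n * U * (volume (K f t)).toReal := by
        apply mul_le_mul_of_nonneg_left hkey (by positivity)

theorem L_antitone {f : En n → ℝ≥0∞} (hn : 1 ≤ n) (hf : LC0 f)
    (hvol : ∀ t : ℝ, 0 < t → t < 1 → 0 < volume (K f t) ∧ volume (K f t) < ∞)
    {s t : ℝ} (hs : 0 < s) (hst : s ≤ t) (ht : t < 1) : L f t ⊆ L f s := by
  rcases eq_or_lt_of_le hst with rfl | hst'
  · exact subset_rfl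
  have ht0 : 0 < t := hs.trans hst'
  have hs1 : s < 1 := lt_of_le_of_lt hst ht
  have hcs : 0 < c f s := c_pos f hvol hs hs1
  have hct : 0 < c f t := c_pos f hvol ht0 ht
  have hcc : c f t ≤ c f s := c_antitone hn hf hvol hs hst' ht
  rintro - ⟨y, hy, rfl⟩
  have hyKs : y ∈ K f s := K_antitone f hst hy
  refine ⟨(c f t / c f s) • y, ?_, ?_⟩
  · have hconv := K_convex hf.2.1 hs
    have h0m : (0 : En n) ∈ K f s := zero_mem_K hf.2.2.1 hs1.le
    have ha : (0:ℝ) ≤ 1 - c f t / c f s := by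
      rw [sub_nonneg]
      exact div_le_one_of_le₀ hcc hcs.le
    have hb : (0:ℝ) ≤ c f t / c f s := by positivity
    have := hconv h0m hyKs ha hb (by ring)
    simpa using this
  · show c f s • ((c f t / c f s) • y) = c f t • y
    rw [smul_smul, mul_div_cancel₀ _ hcs.ne']

end Stmt17aux

namespace Stmt17aux

variable {n : ℕ}

theorem L_closed {f : En n → ℝ≥0∞} (husc : UpperSemicontinuous f)
    (hvol : ∀ t : ℝ, 0 < t → t < 1 → 0 < volume (K f t) ∧ volume (K f t) < ∞)
    {t : ℝ} (ht0 : 0 < t) (ht1 : t < 1) : IsClosed (L f t) :=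
  (K_closed husc t).smul_of_ne_zero (c_pos f hvol ht0 ht1).ne'

noncomputable def ft (f : En n → ℝ≥0∞) (x : En n) : ℝ≥0∞ :=
  ⨆ (s : ℝ) (_ : 0 < s ∧ s < 1 ∧ x ∈ L f s), ENNReal.ofReal s

theorem le_ft {f : En n → ℝ≥0∞} {x : En n} {s : ℝ} (h0 : 0 < s) (h1 : s < 1)
    (hx : x ∈ L f s) : ENNReal.ofReal s ≤ ft f x :=
  le_iSup_of_le s (le_iSup_of_le ⟨h0, h1, hx⟩ le_rfl)

theorem ft_le_one (f : En n → ℝ≥0∞) (x : En n) : ft f x ≤ 1 :=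
  iSup_le fun s => iSup_le fun hs => ENNReal.ofReal_le_one.2 hs.2.1.le

theorem mem_L_of_lt {f : En n → ℝ≥0∞} (hn : 1 ≤ n) (hf : LC0 f)
    (hvol : ∀ t : ℝ, 0 < t → t < 1 → 0 < volume (K f t) ∧ volume (K f t) < ∞)
    {x : En n} {s : ℝ} (h0 : 0 < s) (h : ENNReal.ofReal s < ft f x) : x ∈ L f s := by
  rw [ft, lt_iSup_iff] at h
  obtain ⟨s', hs'⟩ := h
  rw [lt_iSup_iff] at hs'
  obtain ⟨⟨h0', h1', hxL⟩, hlt⟩ := hs'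
  have hss' : s < s' := (ENNReal.ofReal_lt_ofReal_iff h0').1 hlt
  exact L_antitone hn hf hvol h0 hss'.le h1' hxL

theorem mem_L_of_forall {f : En n → ℝ≥0∞} (hn : 1 ≤ n) (hf : LC0 f)
    (hvol : ∀ t : ℝ, 0 < t → t < 1 → 0 < volume (K f t) ∧ volume (K f t) < ∞)
    {t : ℝ} (ht0 : 0 < t) (ht1 : t < 1) {x : En n}
    (hx : ∀ s, 0 < s → s < t → x ∈ L f s) : x ∈ L f t := by
  have hct : 0 < c f t := c_pos f hvol ht0 ht1
  rw [L, Set.mem_smul_set_iff_inv_smul_mem₀ hct.ne']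
  have key : ∀ s0, 0 < s0 → s0 < t → (c f t)⁻¹ • x ∈ K f s0 := by
    intro s0 hs0 hs0t
    set u : ℕ → ℝ := fun k => t - (t - s0) / ((k : ℝ) + 1) with hu
    have hu_lt : ∀ k, u k < t := by
      intro k
      have : 0 < (t - s0) / ((k : ℝ) + 1) :=
        div_pos (by linarith) (by positivity)
      simp only [hu]
      linarith
    have hu_ge : ∀ k, s0 ≤ u k := by
      intro k
      have h1 : (t - s0) / ((k : ℝ) + 1) ≤ t - s0 :=
        div_le_self (by linarith) (by linarith [Nat.cast_nonneg (α := ℝ) k])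
      simp only [hu]
      linarith
    have hu_pos : ∀ k, 0 < u k := fun k => hs0.trans_le (hu_ge k)
    have hu_one : ∀ k, u k < 1 := fun k => (hu_lt k).trans ht1
    have hu_mono : Monotone u := by
      intro k j hkj
      have h1 : (t - s0) / ((j : ℝ) + 1) ≤ (t - s0) / ((k : ℝ) + 1) := by
        apply div_le_div_of_nonneg_left (by linarith) (by positivity)
        have : (k : ℝ) ≤ (j : ℝ) := Nat.cast_le.2 hkj
        linarith
      simp only [hu]
      linarith
    have hdiv : Tendsto (fun k : ℕ => (t - s0) / ((k : ℝ) + 1)) atTop (𝓝 0) := by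
      apply Tendsto.div_atTop (tendsto_const_nhds)
      exact tendsto_atTop_add_const_right atTop 1 tendsto_natCast_atTop_atTop
    have hu_tendsto : Tendsto u atTop (𝓝 t) := by
      have := (tendsto_const_nhds (x := t) (f := (atTop : Filter ℕ))).sub hdiv
      simpa using this
    have hKinter : ⋂ k, K f (u k) = K f t := by
      apply subset_antisymm
      · intro z hz
        simp only [Set.mem_iInter] at hz
        show ENNReal.ofReal t ≤ f z
        exact le_of_tendsto (ENNReal.tendsto_ofReal hu_tendsto)
          (Eventually.of_forall fun k => hz k)
      · exact Set.subset_iInter fun k => K_antitone f (hu_lt k).le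
    have hKlim : Tendsto (fun k => volume (K f (u k))) atTop (𝓝 (volume (K f t))) := by
      have := tendsto_measure_iInter_atTop (μ := volume) (s := fun k => K f (u k))
        (fun k => (K_closed hf.1 (u k)).measurableSet.nullMeasurableSet)
        (fun k j hkj => K_antitone f (hu_mono hkj))
        ⟨0, (hvol (u 0) (hu_pos 0) (hu_one 0)).2.ne⟩
      rwa [hKinter] at this
    have hV : Tendsto (fun k => (volume (K f (u k))).toReal) atTop
        (𝓝 (volume (K f t)).toReal) :=
      (ENNReal.tendsto_toReal (hvol t ht0 ht1).2.ne).comp hKlim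
    have hlog : Tendsto (fun k => Real.log (1 / u k)) atTop (𝓝 (Real.log (1 / t))) := by
      have h1 : Tendsto (fun k => 1 / u k) atTop (𝓝 (1 / t)) :=
        tendsto_const_nhds.div hu_tendsto ht0.ne'
      exact ((Real.continuousAt_log (by positivity)).tendsto.comp h1)
    have hB : Tendsto (fun k => (volume (Metric.closedBall (0 : En n)
        (Real.log (1 / u k)))).toReal) atTop
        (𝓝 (volume (Metric.closedBall (0 : En n) (Real.log (1 / t)))).toReal) := by
      rw [B_eq hn ht0 ht1]
      have := (hlog.pow n).mul_const (volume (Metric.ball (0 : En n) 1)).toReal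
      exact this.congr fun k => (B_eq hn (hu_pos k) (hu_one k)).symm
    have hc : Tendsto (fun k => c f (u k)) atTop (𝓝 (c f t)) := by
      have hVt : (volume (K f t)).toReal ≠ 0 :=
        (ENNReal.toReal_pos (hvol t ht0 ht1).1.ne' (hvol t ht0 ht1).2.ne).ne'
      have hq : Tendsto (fun k => (volume (Metric.closedBall (0 : En n)
          (Real.log (1 / u k)))).toReal / (volume (K f (u k))).toReal) atTop
          (𝓝 ((volume (Metric.closedBall (0 : En n)
            (Real.log (1 / t)))).toReal / (volume (K f t)).toReal)) :=
        hB.div hV hVt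
      exact ((Real.continuousAt_rpow_const _ _ (Or.inr (by positivity))).tendsto.comp hq)
    have hxlim : Tendsto (fun k => (c f (u k))⁻¹ • x) atTop (𝓝 ((c f t)⁻¹ • x)) :=
      (hc.inv₀ hct.ne').smul_const x
    have hmem : ∀ k, (c f (u k))⁻¹ • x ∈ K f s0 := by
      intro k
      have hxL := hx (u k) (hu_pos k) (hu_lt k)
      rw [L, Set.mem_smul_set_iff_inv_smul_mem₀
        (c_pos f hvol (hu_pos k) (hu_one k)).ne'] at hxL
      exact K_antitone f (hu_ge k) hxL
    exact (K_closed hf.1 s0).mem_of_tendsto hxlim (Eventually.of_forall hmem)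
  show ENNReal.ofReal t ≤ f ((c f t)⁻¹ • x)
  refine le_of_forall_lt fun b hb => ?_
  have hbt : b ≠ ⊤ := (hb.trans_le le_top).ne
  have hbt' : b.toReal < t := by
    have := (ENNReal.toReal_lt_toReal hbt ENNReal.ofReal_ne_top).2 hb
    rwa [ENNReal.toReal_ofReal ht0.le] at this
  set s0 := (b.toReal + t) / 2 with hs0def
  have hs00 : 0 < s0 := by
    have : (0:ℝ) ≤ b.toReal := ENNReal.toReal_nonneg
    positivity
  have hs0t : s0 < t := by simp only [hs0def]; linarith
  have hK := key s0 hs00 hs0t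
  calc b = ENNReal.ofReal b.toReal := (ENNReal.ofReal_toReal hbt).symm
    _ < ENNReal.ofReal s0 := (ENNReal.ofReal_lt_ofReal_iff hs00).2 (by
        simp only [hs0def]; linarith [ENNReal.toReal_nonneg (a := b)])
    _ ≤ f ((c f t)⁻¹ • x) := hK

end Stmt17aux

namespace Stmt17aux

variable {n : ℕ}

theorem superlevel {f : En n → ℝ≥0∞} (hn : 1 ≤ n) (hf : LC0 f)
    (hvol : ∀ t : ℝ, 0 < t → t < 1 → 0 < volume (K f t) ∧ volume (K f t) < ∞)
    {t : ℝ} (ht0 : 0 < t) (ht1 : t < 1) :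
    {x : En n | ENNReal.ofReal t ≤ ft f x} = L f t := by
  ext x
  constructor
  · intro hx
    refine mem_L_of_forall hn hf hvol ht0 ht1 fun s hs hst => ?_
    exact mem_L_of_lt hn hf hvol hs
      (lt_of_lt_of_le ((ENNReal.ofReal_lt_ofReal_iff ht0).2 hst) hx)
  · intro hx
    exact le_ft ht0 ht1 hx

theorem ft_usc {f : En n → ℝ≥0∞} (hn : 1 ≤ n) (hf : LC0 f)
    (hvol : ∀ t : ℝ, 0 < t → t < 1 → 0 < volume (K f t) ∧ volume (K f t) < ∞) :
    UpperSemicontinuous (ft f) := by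
  rw [upperSemicontinuous_iff_isClosed_preimage]
  intro y
  rcases eq_or_ne y 0 with rfl | hy0
  · have : ft f ⁻¹' Set.Ici 0 = Set.univ := by
      ext x; simp
    rw [this]; exact isClosed_univ
  by_cases hy1 : 1 < y
  · have : ft f ⁻¹' Set.Ici y = ∅ := by
      ext x
      simp only [Set.mem_preimage, Set.mem_Ici, Set.mem_empty_iff_false, iff_false, not_le]
      exact lt_of_le_of_lt (ft_le_one f x) hy1
    rw [this]; exact isClosed_empty
  push_neg at hy1
  have hyt : y ≠ ⊤ := (hy1.trans_lt ENNReal.one_lt_top).ne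
  have hkey : ft f ⁻¹' Set.Ici y =
      ⋂ (s : ℝ) (_ : 0 < s ∧ s < 1 ∧ ENNReal.ofReal s < y), L f s := by
    ext x
    simp only [Set.mem_preimage, Set.mem_Ici, Set.mem_iInter]
    constructor
    · intro hx s hs
      exact mem_L_of_lt hn hf hvol hs.1 (lt_of_lt_of_le hs.2.2 hx)
    · intro h
      refine le_of_forall_lt fun b hb => ?_
      have hbt : b ≠ ⊤ := (hb.trans_le le_top).ne
      have hby : b.toReal < y.toReal := (ENNReal.toReal_lt_toReal hbt hyt).2 hb
      have hy0' : 0 < y.toReal := ENNReal.toReal_pos hy0 hyt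
      have hyle : y.toReal ≤ 1 := by
        have := ENNReal.toReal_mono (by simp) hy1
        simpa using this
      set s := (b.toReal + y.toReal) / 2 with hsdef
      have hs0 : 0 < s := by
        have : (0:ℝ) ≤ b.toReal := ENNReal.toReal_nonneg
        positivity
      have hs1 : s < 1 := by simp only [hsdef]; linarith
      have hsy : ENNReal.ofReal s < y := by
        calc ENNReal.ofReal s < ENNReal.ofReal y.toReal :=
              (ENNReal.ofReal_lt_ofReal_iff hy0').2 (by simp only [hsdef]; linarith)
          _ = y := ENNReal.ofReal_toReal hyt
      have hxL := h s ⟨hs0, hs1, hsy⟩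
      calc b = ENNReal.ofReal b.toReal := (ENNReal.ofReal_toReal hbt).symm
        _ < ENNReal.ofReal s := (ENNReal.ofReal_lt_ofReal_iff hs0).2 (by
            simp only [hsdef]; linarith [ENNReal.toReal_nonneg (a := b)])
        _ ≤ ft f x := le_ft hs0 hs1 hxL
  rw [hkey]
  exact isClosed_iInter fun s => isClosed_iInter fun hs =>
    L_closed hf.1 hvol hs.1 hs.2.1

theorem ft_qc {f : En n → ℝ≥0∞} (hn : 1 ≤ n) (hf : LC0 f)
    (hvol : ∀ t : ℝ, 0 < t → t < 1 → 0 < volume (K f t) ∧ volume (K f t) < ∞) :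
    QuasiConcave (ft f) := by
  intro x y l hl0 hl1
  set m := min (ft f x) (ft f y) with hm
  refine le_of_forall_lt fun b hb => ?_
  have hbt : b ≠ ⊤ := (hb.trans_le le_top).ne
  have hm1 : m ≤ 1 := le_trans (min_le_left _ _) (ft_le_one f x)
  have hmt : m ≠ ⊤ := (hm1.trans_lt ENNReal.one_lt_top).ne
  have hm0 : 0 < m := pos_of_gt hb
  have hby : b.toReal < m.toReal := (ENNReal.toReal_lt_toReal hbt hmt).2 hb
  have hm0' : 0 < m.toReal := ENNReal.toReal_pos hm0.ne' hmt
  have hmle : m.toReal ≤ 1 := by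
    have := ENNReal.toReal_mono (by simp) hm1
    simpa using this
  set s := (b.toReal + m.toReal) / 2 with hsdef
  have hs0 : 0 < s := by
    have : (0:ℝ) ≤ b.toReal := ENNReal.toReal_nonneg
    positivity
  have hs1 : s < 1 := by simp only [hsdef]; linarith
  have hsm : ENNReal.ofReal s < m := by
    calc ENNReal.ofReal s < ENNReal.ofReal m.toReal :=
          (ENNReal.ofReal_lt_ofReal_iff hm0').2 (by simp only [hsdef]; linarith)
      _ = m := ENNReal.ofReal_toReal hmt
  have hxL : x ∈ L f s := mem_L_of_lt hn hf hvol hs0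
    (hsm.trans_le (min_le_left _ _))
  have hyL : y ∈ L f s := mem_L_of_lt hn hf hvol hs0
    (hsm.trans_le (min_le_right _ _))
  have hconvL : Convex ℝ (L f s) := (K_convex hf.2.1 hs0).smul _
  have hzL : l • x + (1 - l) • y ∈ L f s :=
    hconvL hxL hyL hl0.le (by linarith) (by ring)
  calc b = ENNReal.ofReal b.toReal := (ENNReal.ofReal_toReal hbt).symm
    _ < ENNReal.ofReal s := (ENNReal.ofReal_lt_ofReal_iff hs0).2 (by
        simp only [hsdef]; linarith [ENNReal.toReal_nonneg (a := b)])
    _ ≤ ft f (l • x + (1 - l) • y) := le_ft hs0 hs1 hzL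

theorem vol_L {f : En n → ℝ≥0∞} (hn : 1 ≤ n)
    (hvol : ∀ t : ℝ, 0 < t → t < 1 → 0 < volume (K f t) ∧ volume (K f t) < ∞)
    {t : ℝ} (ht0 : 0 < t) (ht1 : t < 1) :
    volume (L f t) = volume (Metric.closedBall (0 : En n) (Real.log (1 / t))) := by
  have hct : 0 < c f t := c_pos f hvol ht0 ht1
  have hBpos : 0 < (volume (Metric.closedBall (0 : En n)
      (Real.log (1 / t)))).toReal :=
    ENNReal.toReal_pos (Metric.measure_closedBall_pos volume _
      (log_one_div_pos ht0 ht1)).ne' measure_closedBall_lt_top.ne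
  have hVpos : 0 < (volume (K f t)).toReal :=
    ENNReal.toReal_pos (hvol t ht0 ht1).1.ne' (hvol t ht0 ht1).2.ne
  rw [L, Measure.addHaar_smul volume _ (K f t), finrank_euclideanSpace_fin,
    abs_of_pos (pow_pos hct n)]
  have hcn : c f t ^ n = (volume (Metric.closedBall (0 : En n)
      (Real.log (1 / t)))).toReal / (volume (K f t)).toReal := by
    have hn' : (n : ℝ) ≠ 0 := by
      exact_mod_cast (Nat.pos_of_ne_zero (by omega)).ne'
    rw [c, ← Real.rpow_natCast (_ ^ ((1:ℝ)/(n:ℝ))) n, ← Real.rpow_mul (by positivity),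
      one_div_mul_cancel hn', Real.rpow_one]
  rw [hcn]
  set B := (volume (Metric.closedBall (0 : En n) (Real.log (1 / t)))).toReal with hB
  set V := (volume (K f t)).toReal with hV
  have h1 : volume (K f t) = ENNReal.ofReal V :=
    (ENNReal.ofReal_toReal (hvol t ht0 ht1).2.ne).symm
  rw [h1, ← ENNReal.ofReal_mul (by positivity), div_mul_cancel₀ _ hVpos.ne',
    hB, ENNReal.ofReal_toReal measure_closedBall_lt_top.ne]

end Stmt17aux

theorem stmt17 (n : ℕ) (hn : 1 ≤ n) (f : En n → ℝ≥0∞) (hf : LC0 f)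
    (hvol : ∀ t : ℝ, 0 < t → t < 1 →
      0 < volume {x : En n | ENNReal.ofReal t ≤ f x} ∧
      volume {x : En n | ENNReal.ofReal t ≤ f x} < ∞) :
    ∃ ftilde : En n → ℝ≥0∞,
      UpperSemicontinuous ftilde ∧ QuasiConcave ftilde ∧ (∀ x, ftilde x ≤ 1) ∧
      ∀ t : ℝ, 0 < t → t < 1 →
        ({x : En n | ENNReal.ofReal t ≤ ftilde x} =
          (((volume (Metric.closedBall (0 : En n) (Real.log (1 / t)))).toReal /
              (volume {x : En n | ENNReal.ofReal t ≤ f x}).toReal) ^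
            ((1 : ℝ) / (n : ℝ))) •
            {x : En n | ENNReal.ofReal t ≤ f x}) ∧
        volume {x : En n | ENNReal.ofReal t ≤ ftilde x} =
          volume (Metric.closedBall (0 : En n) (Real.log (1 / t))) := by
  have hvol' : ∀ t : ℝ, 0 < t → t < 1 →
      0 < volume (Stmt17aux.K f t) ∧ volume (Stmt17aux.K f t) < ∞ := hvol
  refine ⟨Stmt17aux.ft f, Stmt17aux.ft_usc hn hf hvol', Stmt17aux.ft_qc hn hf hvol',
    Stmt17aux.ft_le_one f, ?_⟩
  intro t ht0 ht1
  have hsl := Stmt17aux.superlevel hn hf hvol' ht0 ht1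
  exact ⟨hsl, by rw [show {x : En n | ENNReal.ofReal t ≤ Stmt17aux.ft f x} =
      Stmt17aux.L f t from hsl]; exact Stmt17aux.vol_L hn hvol' ht0 ht1⟩
end
end
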